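/- arXiv:1601.06569 — 5 statements merged into one kernel-verified Lean document; each statement's English description precedes it below -/
import Mathlib

section
/- (Ng–Russell characterization of optimal policies.) Fix an environment on S = Fin d with m ≥ 1 actions, row-stochastic transition matrices P_a for a ∈ Fin m, and discount γ ∈ (0,1), and let R ∈ ℝ^d. A policy π is optimal for this environment and R if and only if for every action a ∈ Fin m, every component of the vector (P_π − P_a)(I − γP_π)⁻¹R is nonnegative. -/
open Matrix

/-- A `d × d` real matrix is row-stochastic if all entries are nonnegative
and each row sums to `1`. -/
def RowStochastic {d : ℕ} (P : Matrix (Fin d) (Fin d) ℝ) : Prop :=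
  (∀ s s', 0 ≤ P s s') ∧ (∀ s, ∑ s', P s s' = 1)

/-- Transition matrix of a policy `π`: its `s`-th row is the `s`-th row of `P (π s)`. -/
def policyMatrix {d m : ℕ} (P : Fin m → Matrix (Fin d) (Fin d) ℝ) (π : Fin d → Fin m) :
    Matrix (Fin d) (Fin d) ℝ :=
  Matrix.of fun s s' => P (π s) s s'

/-- Value vector of the policy `π` for discount `γ`, transition matrices `P`,
and reward vector `R`: `V_π(R) = (I − γ P_π)⁻¹ R`. -/
noncomputable def valueVec {d m : ℕ} (γ : ℝ) (P : Fin m → Matrix (Fin d) (Fin d) ℝ)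
    (π : Fin d → Fin m) (R : Fin d → ℝ) : Fin d → ℝ :=
  ((1 : Matrix (Fin d) (Fin d) ℝ) - γ • policyMatrix P π)⁻¹ *ᵥ R

/-- `π` is optimal for the environment `(P, γ)` and reward `R` if its value vector
dominates that of every other policy componentwise. -/
def IsOptimal {d m : ℕ} (γ : ℝ) (P : Fin m → Matrix (Fin d) (Fin d) ℝ)
    (π : Fin d → Fin m) (R : Fin d → ℝ) : Prop :=
  ∀ π' : Fin d → Fin m, ∀ s, valueVec γ P π' R s ≤ valueVec γ P π R s

section Aux

variable {d : ℕ}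

lemma mulVec_entry (A : Matrix (Fin d) (Fin d) ℝ) (x : Fin d → ℝ) (s : Fin d) :
    (A *ᵥ x) s = ∑ t, A s t * x t := rfl

lemma one_sub_smul_mulVec (Q : Matrix (Fin d) (Fin d) ℝ) (γ : ℝ) (x : Fin d → ℝ) (s : Fin d) :
    (((1 : Matrix (Fin d) (Fin d) ℝ) - γ • Q) *ᵥ x) s = x s - γ * ∑ t, Q s t * x t := by
  rw [Matrix.sub_mulVec, Matrix.smul_mulVec, Matrix.one_mulVec]
  simp [mulVec_entry, Finset.mul_sum]

/-- Minimum principle: if `(I - γQ) x ≥ 0` componentwise, then `x ≥ 0`. -/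
lemma nonneg_of_one_sub_smul_mulVec_nonneg (hd : 1 ≤ d) {Q : Matrix (Fin d) (Fin d) ℝ}
    (hQ : RowStochastic Q) {γ : ℝ} (hγ0 : 0 ≤ γ) (hγ1 : γ < 1) {x : Fin d → ℝ}
    (h : ∀ s, 0 ≤ (((1 : Matrix (Fin d) (Fin d) ℝ) - γ • Q) *ᵥ x) s) :
    ∀ s, 0 ≤ x s := by
  have : Nonempty (Fin d) := ⟨⟨0, hd⟩⟩
  obtain ⟨s₀, hs₀⟩ := Finite.exists_min x
  have h0 := h s₀
  rw [one_sub_smul_mulVec] at h0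
  have hsum : x s₀ ≤ ∑ t, Q s₀ t * x t := by
    calc x s₀ = ∑ t, Q s₀ t * x s₀ := by rw [← Finset.sum_mul, hQ.2 s₀, one_mul]
    _ ≤ ∑ t, Q s₀ t * x t :=
        Finset.sum_le_sum fun t _ => mul_le_mul_of_nonneg_left (hs₀ t) (hQ.1 s₀ t)
  have h1 : 0 ≤ x s₀ := by nlinarith
  exact fun s => le_trans h1 (hs₀ s)

lemma det_one_sub_smul_ne_zero (hd : 1 ≤ d) {Q : Matrix (Fin d) (Fin d) ℝ}
    (hQ : RowStochastic Q) {γ : ℝ} (hγ0 : 0 ≤ γ) (hγ1 : γ < 1) :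
    ((1 : Matrix (Fin d) (Fin d) ℝ) - γ • Q).det ≠ 0 := by
  intro hdet
  obtain ⟨v, hv, hv0⟩ := (Matrix.exists_mulVec_eq_zero_iff).2 hdet
  apply hv
  have h1 : ∀ s, 0 ≤ v s :=
    nonneg_of_one_sub_smul_mulVec_nonneg hd hQ hγ0 hγ1 (fun s => by rw [hv0]; exact le_refl 0)
  have h2 : ∀ s, 0 ≤ (-v) s :=
    nonneg_of_one_sub_smul_mulVec_nonneg hd hQ hγ0 hγ1
      (fun s => by rw [Matrix.mulVec_neg, hv0]; simp)
  funext s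
  have := h2 s
  simp only [Pi.neg_apply, neg_nonneg] at this
  exact le_antisymm this (h1 s)

lemma policyMatrix_apply {m : ℕ} (P : Fin m → Matrix (Fin d) (Fin d) ℝ) (π : Fin d → Fin m)
    (s t : Fin d) : policyMatrix P π s t = P (π s) s t := rfl

lemma policyMatrix_rowStochastic {m : ℕ} (P : Fin m → Matrix (Fin d) (Fin d) ℝ)
    (hP : ∀ a, RowStochastic (P a)) (π : Fin d → Fin m) :
    RowStochastic (policyMatrix P π) :=
  ⟨fun s s' => (hP (π s)).1 s s', fun s => (hP (π s)).2 s⟩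

lemma valueVec_eq {m : ℕ} (hd : 1 ≤ d) (γ : ℝ) (hγ0 : 0 ≤ γ) (hγ1 : γ < 1)
    (P : Fin m → Matrix (Fin d) (Fin d) ℝ) (hP : ∀ a, RowStochastic (P a))
    (π : Fin d → Fin m) (R : Fin d → ℝ) :
    ((1 : Matrix (Fin d) (Fin d) ℝ) - γ • policyMatrix P π) *ᵥ valueVec γ P π R = R := by
  unfold valueVec
  rw [Matrix.mulVec_mulVec,
    Matrix.mul_nonsing_inv _
      (isUnit_iff_ne_zero.2
        (det_one_sub_smul_ne_zero hd (policyMatrix_rowStochastic P hP π) hγ0 hγ1)),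
    Matrix.one_mulVec]

end Aux

/-- **Ng–Russell characterization of optimal policies.** A policy `π` is optimal for
the environment `(P, γ)` and reward `R` iff for every action `a`, every component of
`(P_π − P_a)(I − γ P_π)⁻¹ R` is nonnegative. -/
theorem ng_russell {d m : ℕ} (hd : 1 ≤ d) (hm : 1 ≤ m)
    (P : Fin m → Matrix (Fin d) (Fin d) ℝ) (hP : ∀ a, RowStochastic (P a))
    (γ : ℝ) (hγ0 : 0 < γ) (hγ1 : γ < 1) (R : Fin d → ℝ) (π : Fin d → Fin m) :
    IsOptimal γ P π R ↔
      ∀ a : Fin m, ∀ s : Fin d,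
        0 ≤ ((policyMatrix P π - P a) *ᵥ
            (((1 : Matrix (Fin d) (Fin d) ℝ) - γ • policyMatrix P π)⁻¹ *ᵥ R)) s := by
  set V := valueVec γ P π R with hVdef
  have hγ0' : (0:ℝ) ≤ γ := le_of_lt hγ0
  have hV : ∀ t, V t - γ * ∑ u, P (π t) t u * V u = R t := by
    intro t
    have := congrFun (valueVec_eq hd γ hγ0' hγ1 P hP π R) t
    rw [one_sub_smul_mulVec] at this
    exact this
  have hcomp : ∀ a (x : Fin d → ℝ) t,
      (policyMatrix P a *ᵥ x) t = ∑ u, P (a t) t u * x u := fun _ _ _ => rfl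
  constructor
  · -- optimal → condition
    intro hopt a s
    by_contra hneg
    push_neg at hneg
    set π' := Function.update π s a with hπ'
    set V' := valueVec γ P π' R with hV'def
    have hV' : ∀ t, V' t - γ * ∑ u, P (π' t) t u * V' u = R t := by
      intro t
      have := congrFun (valueVec_eq hd γ hγ0' hγ1 P hP π' R) t
      rw [one_sub_smul_mulVec] at this
      exact this
    set w := V' - V with hw
    have hδ : ∀ t, (((1 : Matrix (Fin d) (Fin d) ℝ) - γ • policyMatrix P π') *ᵥ w) t
        = (V' t - γ * ∑ u, P (π' t) t u * V' u) - (V t - γ * ∑ u, P (π' t) t u * V u) := by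
      intro t
      rw [one_sub_smul_mulVec]
      simp only [policyMatrix_apply]
      have : ∀ u, w u = V' u - V u := fun u => rfl
      simp only [this, mul_sub, Finset.sum_sub_distrib]
      ring
    have hδne : ∀ t, t ≠ s → (((1 : Matrix (Fin d) (Fin d) ℝ) - γ • policyMatrix P π') *ᵥ w) t = 0 := by
      intro t ht
      rw [hδ t, hV' t]
      have hπt : π' t = π t := Function.update_of_ne ht a π
      rw [hπt, hV t, sub_self]
    have hδs : 0 < (((1 : Matrix (Fin d) (Fin d) ℝ) - γ • policyMatrix P π') *ᵥ w) s := by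
      rw [hδ s, hV' s]
      have hπs : π' s = a := Function.update_self s a π
      rw [hπs]
      have hVs : V s = R s + γ * ∑ u, P (π s) s u * V u := by
        have := hV s; linarith
      have hlt : ∑ u, (P (π s) s u - P a s u) * V u < 0 := by
        have : ((policyMatrix P π - P a) *ᵥ V) s = ∑ u, (P (π s) s u - P a s u) * V u := by
          simp [mulVec_entry, Matrix.sub_apply, policyMatrix]
        have hneg' : ((policyMatrix P π - P a) *ᵥ V) s < 0 := hneg
        rw [this] at hneg'
        exact hneg'
      have hsplit : ∑ u, (P (π s) s u - P a s u) * V u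
          = (∑ u, P (π s) s u * V u) - ∑ u, P a s u * V u := by
        rw [← Finset.sum_sub_distrib]; congr 1; ext u; ring
      rw [hsplit] at hlt
      nlinarith
    have hδnn : ∀ t, 0 ≤ (((1 : Matrix (Fin d) (Fin d) ℝ) - γ • policyMatrix P π') *ᵥ w) t := by
      intro t
      by_cases ht : t = s
      · subst ht; exact le_of_lt hδs
      · rw [hδne t ht]
    have hwnn : ∀ t, 0 ≤ w t :=
      nonneg_of_one_sub_smul_mulVec_nonneg hd (policyMatrix_rowStochastic P hP π') hγ0' hγ1 hδnn
    have hws : 0 < w s := by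
      have h0 := hδs
      rw [one_sub_smul_mulVec] at h0
      simp only [policyMatrix_apply] at h0
      have hsum : 0 ≤ ∑ u, P (π' s) s u * w u :=
        Finset.sum_nonneg fun u _ => mul_nonneg ((hP (π' s)).1 s u) (hwnn u)
      nlinarith
    have : V' s ≤ V s := hopt π' s
    have hws' : w s = V' s - V s := rfl
    linarith [hws, hws'.symm ▸ hws]
  · -- condition → optimal
    intro h π' s
    set V' := valueVec γ P π' R with hV'def
    have hV' : ∀ t, V' t - γ * ∑ u, P (π' t) t u * V' u = R t := by
      intro t
      have := congrFun (valueVec_eq hd γ hγ0' hγ1 P hP π' R) t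
      rw [one_sub_smul_mulVec] at this
      exact this
    set w := V - V' with hw
    have hδnn : ∀ t, 0 ≤ (((1 : Matrix (Fin d) (Fin d) ℝ) - γ • policyMatrix P π') *ᵥ w) t := by
      intro t
      rw [one_sub_smul_mulVec]
      simp only [policyMatrix_apply]
      have hwu : ∀ u, w u = V u - V' u := fun u => rfl
      have expand : w t - γ * ∑ u, P (π' t) t u * w u
          = (V t - γ * ∑ u, P (π' t) t u * V u) - (V' t - γ * ∑ u, P (π' t) t u * V' u) := by
        simp only [hwu, mul_sub, Finset.sum_sub_distrib]
        ring
      rw [expand, hV' t]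
      have hkey : 0 ≤ ((policyMatrix P π - P (π' t)) *ᵥ V) t := h (π' t) t
      have hexp : ((policyMatrix P π - P (π' t)) *ᵥ V) t
          = (∑ u, P (π t) t u * V u) - ∑ u, P (π' t) t u * V u := by
        simp [mulVec_entry, Matrix.sub_apply, policyMatrix, sub_mul, Finset.sum_sub_distrib]
      rw [hexp] at hkey
      have hRt := hV t
      nlinarith
    have hwnn : ∀ t, 0 ≤ w t :=
      nonneg_of_one_sub_smul_mulVec_nonneg hd (policyMatrix_rowStochastic P hP π') hγ0' hγ1 hδnn
    have := hwnn s
    have hws : w s = V s - V' s := rfl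
    rw [hws] at this
    linarith
end

section
/- For every environment on S = Fin d and every constant reward vector c·1 (c ∈ ℝ), every policy is optimal for that environment and c·1. Conversely, if R ∈ ℝ^d is not a constant vector, then there exists an environment on S and a policy π such that π is not optimal for that environment and R. -/
open Matrix

lemma aux_isUnit_det {d : ℕ} (P : Matrix (Fin d) (Fin d) ℝ) (hP : RowStochastic P)
    {γ : ℝ} (h0 : 0 < γ) (h1 : γ < 1) :
    IsUnit ((1 : Matrix (Fin d) (Fin d) ℝ) - γ • P).det := by
  refine isUnit_iff_ne_zero.mpr (det_ne_zero_of_sum_row_lt_diag ?_)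
  intro k
  have hle : ∀ j, P k j ≤ 1 := by
    intro j
    calc P k j ≤ ∑ j', P k j' :=
      Finset.single_le_sum (fun i _ => hP.1 k i) (Finset.mem_univ j)
    _ = 1 := hP.2 k
  have hsum : ∑ j ∈ Finset.univ.erase k, ‖((1 : Matrix (Fin d) (Fin d) ℝ) - γ • P) k j‖
      = γ * (1 - P k k) := by
    have : ∀ j ∈ Finset.univ.erase k,
        ‖((1 : Matrix (Fin d) (Fin d) ℝ) - γ • P) k j‖ = γ * P k j := by
      intro j hj
      have hjk : j ≠ k := Finset.ne_of_mem_erase hj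
      simp [Matrix.sub_apply, Matrix.smul_apply, Matrix.one_apply, Ne.symm hjk,
        abs_of_nonneg h0.le, abs_of_nonneg (hP.1 k j)]
    rw [Finset.sum_congr rfl this, ← Finset.mul_sum]
    congr 1
    have := hP.2 k
    have : ∑ j ∈ Finset.univ.erase k, P k j = 1 - P k k := by
      rw [Finset.sum_erase_eq_sub (Finset.mem_univ k), hP.2 k]
    rw [this]
  have hdiag : ‖((1 : Matrix (Fin d) (Fin d) ℝ) - γ • P) k k‖ = 1 - γ * P k k := by
    have : γ * P k k ≤ 1 := le_trans (mul_le_one₀ h1.le (hP.1 k k) (hle k)) le_rfl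
    simp [Matrix.sub_apply, Matrix.smul_apply, Matrix.one_apply, abs_of_nonneg, this,
      abs_of_nonneg (by linarith : (0:ℝ) ≤ 1 - γ * P k k)]
  rw [hsum, hdiag]
  have := hP.1 k k
  nlinarith [hle k]

lemma aux_inv_mulVec {d : ℕ} {A : Matrix (Fin d) (Fin d) ℝ} (hA : IsUnit A.det)
    {v R : Fin d → ℝ} (h : A *ᵥ v = R) : A⁻¹ *ᵥ R = v := by
  rw [← h, Matrix.mulVec_mulVec, Matrix.nonsing_inv_mul _ hA, Matrix.one_mulVec]

/-- In every environment, every policy is optimal for a constant reward `c·1`;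
conversely, if `R` is not constant then there is an environment and a policy `π`
which is not optimal for that environment and `R`. -/
theorem constant_reward_all_optimal_and_nonconstant_not {d : ℕ} (hd : 1 ≤ d) :
    (∀ (m : ℕ), 1 ≤ m → ∀ (P : Fin m → Matrix (Fin d) (Fin d) ℝ),
      (∀ a, RowStochastic (P a)) → ∀ (γ : ℝ), 0 < γ → γ < 1 →
        ∀ (c : ℝ) (π : Fin d → Fin m), IsOptimal γ P π (c • (1 : Fin d → ℝ))) ∧
    (∀ R : Fin d → ℝ, (¬ ∃ c : ℝ, R = c • (1 : Fin d → ℝ)) →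
      ∃ (m : ℕ), 1 ≤ m ∧ ∃ P : Fin m → Matrix (Fin d) (Fin d) ℝ,
        (∀ a, RowStochastic (P a)) ∧ ∃ γ : ℝ, 0 < γ ∧ γ < 1 ∧
          ∃ π : Fin d → Fin m, ¬ IsOptimal γ P π R) := by
  constructor
  · intro m hm P hP γ hγ0 hγ1 c π
    -- every policy has value vector (c/(1-γ)) • 1
    have key : ∀ ρ : Fin d → Fin m,
        valueVec γ P ρ (c • (1 : Fin d → ℝ)) = fun _ => c / (1 - γ) := by
      intro ρ
      have hst : RowStochastic (policyMatrix P ρ) := by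
        refine ⟨fun s s' => (hP (ρ s)).1 s s', fun s => (hP (ρ s)).2 s⟩
      have hdet := aux_isUnit_det _ hst hγ0 hγ1
      have hmul : ((1 : Matrix (Fin d) (Fin d) ℝ) - γ • policyMatrix P ρ) *ᵥ
          (fun _ => c / (1 - γ)) = c • (1 : Fin d → ℝ) := by
        funext s
        have hrow := hst.2 s
        have h1γ : (1 : ℝ) - γ ≠ 0 := by linarith
        simp only [Matrix.mulVec, dotProduct, Matrix.sub_apply, Matrix.smul_apply,
          Matrix.one_apply, sub_mul, Finset.sum_sub_distrib, smul_eq_mul, Pi.smul_apply,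
          Pi.one_apply, ite_mul, one_mul, zero_mul, Finset.sum_ite_eq, Finset.mem_univ,
          if_true]
        simp_rw [mul_assoc]
        rw [← Finset.mul_sum, ← Finset.sum_mul, hrow, one_mul]
        field_simp
      show ((1 : Matrix (Fin d) (Fin d) ℝ) - γ • policyMatrix P ρ)⁻¹ *ᵥ (c • (1 : Fin d → ℝ))
        = fun _ => c / (1 - γ)
      exact aux_inv_mulVec hdet hmul
    intro ρ s
    rw [key ρ, key π]
  · intro R hR
    -- R is nonconstant: find i j with R i < R j
    have hne : ∃ i j : Fin d, R i < R j := by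
      by_contra h
      push_neg at h
      apply hR
      have s0 : Fin d := ⟨0, hd⟩
      refine ⟨R ⟨0, hd⟩, funext fun s => ?_⟩
      have h1 := h s ⟨0, hd⟩
      have h2 := h ⟨0, hd⟩ s
      simp only [Pi.smul_apply, Pi.one_apply, smul_eq_mul, mul_one]
      linarith
    obtain ⟨i, j, hij⟩ := hne
    set t : Fin 2 → Fin d := ![i, j] with ht
    refine ⟨2, by norm_num, fun a => Matrix.of fun s s' => if s' = t a then 1 else 0,
      ?_, 1/2, by norm_num, by norm_num, fun _ => 0, ?_⟩
    · intro a
      constructor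
      · intro s s'; dsimp only [Matrix.of_apply]; split <;> norm_num
      · intro s; simp
    · intro hopt
      set P : Fin 2 → Matrix (Fin d) (Fin d) ℝ :=
        fun a => Matrix.of fun s s' => if s' = t a then 1 else 0 with hPdef
      have key : ∀ a : Fin 2, valueVec (1/2) P (fun _ => a) R = fun s => R s + R (t a) := by
        intro a
        have hst : RowStochastic (policyMatrix P (fun _ => a)) := by
          constructor
          · intro s s'
            simp only [policyMatrix, hPdef, Matrix.of_apply]
            split <;> norm_num
          · intro s
            simp [policyMatrix, hPdef]
        have hdet := aux_isUnit_det _ hst (by norm_num : (0:ℝ) < 1/2) (by norm_num : (1/2:ℝ) < 1)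
        have hmul : ((1 : Matrix (Fin d) (Fin d) ℝ) - (1/2 : ℝ) • policyMatrix P (fun _ => a)) *ᵥ
            (fun s => R s + R (t a)) = R := by
          funext s
          simp only [Matrix.mulVec, dotProduct, Matrix.sub_apply, Matrix.smul_apply,
            Matrix.one_apply, policyMatrix, hPdef, Matrix.of_apply, sub_mul,
            Finset.sum_sub_distrib, smul_eq_mul, ite_mul, one_mul, zero_mul, mul_ite, mul_zero,
            Finset.sum_ite_eq, Finset.sum_ite_eq', Finset.mem_univ, if_true]
          ring
        show ((1 : Matrix (Fin d) (Fin d) ℝ) - (1/2:ℝ) • policyMatrix P (fun _ => a))⁻¹ *ᵥ R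
          = fun s => R s + R (t a)
        exact aux_inv_mulVec hdet hmul
      have h0 := hopt (fun _ => 1) i
      rw [key 0, key 1] at h0
      simp only [ht] at h0
      simp only [Matrix.cons_val_zero, Matrix.cons_val_one, Matrix.head_cons] at h0
      linarith
end

section
/- (Canonicalization characterizes behavioral equivalence.) For any R, R' ∈ ℝ^d, R and R' are behaviorally equivalent (i.e., for every environment on S = Fin d, the set of policies optimal for the environment and R equals the set of policies optimal for the environment and R') if and only if the canonical forms of R and R' are equal. -/
open Matrix

open Classical

/-- The canonical form of a reward vector: the zero vector if `R` is constant, and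
otherwise `(R − (min_s R s)·1) / (max_s R s − min_s R s)`. -/
noncomputable def canon {d : ℕ} [NeZero d] (R : Fin d → ℝ) : Fin d → ℝ :=
  if ∃ c : ℝ, R = fun _ => c then 0
  else fun s =>
    (R s - Finset.univ.inf' Finset.univ_nonempty R) /
      (Finset.univ.sup' Finset.univ_nonempty R - Finset.univ.inf' Finset.univ_nonempty R)

/-!
Both sides say that `R'` is a positive affine image `a • R + b` of `R`. Such a map sends every
value vector `V_π` to `a • V_π + b / (1 - γ)`, so it preserves optimality; and the canonical
form is a positive affine normalisation, invariant under such maps and inverted by one.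

Conversely, in the environment whose two actions jump to a state drawn from the lotteries `p`
and `q` whatever the current state, always choosing `p` is optimal iff `q ⬝ᵥ R ≤ p ⬝ᵥ R`.
Behaviorally equivalent rewards therefore rank lotteries alike, and comparing each state with
the mixture of an argmax and an argmin of `R` having the same expected `R` forces `R'` to be
affine in `R`.
-/

open Finset

variable {d : ℕ}

theorem dotProduct_add_const {ι : Type*} [Fintype ι] {r : ι → ℝ} (hr : ∑ i, r i = 1)
    (v : ι → ℝ) (c : ℝ) : r ⬝ᵥ (fun i => v i + c) = r ⬝ᵥ v + c := by
  simp only [dotProduct, mul_add, sum_add_distrib, ← sum_mul, hr, one_mul]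

theorem RowStochastic.mulVec_le {Q : Matrix (Fin d) (Fin d) ℝ} (hQ : RowStochastic Q)
    {w : Fin d → ℝ} {c : ℝ} (hw : ∀ t, w t ≤ c) (s : Fin d) : (Q *ᵥ w) s ≤ c :=
  calc (Q *ᵥ w) s = ∑ t, Q s t * w t := rfl
    _ ≤ ∑ t, Q s t * c := sum_le_sum fun t _ => mul_le_mul_of_nonneg_left (hw t) (hQ.1 s t)
    _ = c := by rw [← sum_mul, hQ.2 s, one_mul]

theorem RowStochastic.mulVec_const {Q : Matrix (Fin d) (Fin d) ℝ} (hQ : RowStochastic Q)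
    (c : ℝ) : Q *ᵥ (fun _ => c) = fun _ => c := by
  funext s
  simp only [mulVec, dotProduct, ← sum_mul, hQ.2 s, one_mul]

/-- Maximum principle: evaluate at a maximiser of `w`. -/
theorem RowStochastic.nonpos_of_le_smul_mulVec {Q : Matrix (Fin d) (Fin d) ℝ}
    (hQ : RowStochastic Q) {γ : ℝ} (hγ0 : 0 ≤ γ) (hγ1 : γ < 1) {w : Fin d → ℝ}
    (hw : ∀ s, w s ≤ γ * (Q *ᵥ w) s) (s : Fin d) : w s ≤ 0 := by
  have : Nonempty (Fin d) := ⟨s⟩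
  obtain ⟨u, hu⟩ := Finite.exists_max w
  have : w u ≤ γ * w u := (hw u).trans (mul_le_mul_of_nonneg_left (hQ.mulVec_le hu u) hγ0)
  nlinarith [hu s]

theorem RowStochastic.isUnit_one_sub_smul {Q : Matrix (Fin d) (Fin d) ℝ}
    (hQ : RowStochastic Q) {γ : ℝ} (hγ0 : 0 ≤ γ) (hγ1 : γ < 1) : IsUnit (1 - γ • Q) := by
  rw [← mulVec_injective_iff_isUnit]
  intro u v huv
  have hfix : ∀ s, (u - v) s = γ * (Q *ᵥ (u - v)) s := fun s => by
    have := congrFun huv s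
    simp only [sub_mulVec, one_mulVec, smul_mulVec, mulVec_sub, Pi.sub_apply, Pi.smul_apply,
      smul_eq_mul] at this ⊢
    linarith
  funext s
  have hle := hQ.nonpos_of_le_smul_mulVec hγ0 hγ1 (fun t => (hfix t).le) s
  have hge := hQ.nonpos_of_le_smul_mulVec hγ0 hγ1 (w := -(u - v))
    (fun t => by simp only [mulVec_neg, Pi.neg_apply, hfix t, mul_neg, le_refl]) s
  simp only [Pi.sub_apply, Pi.neg_apply] at hle hge
  linarith

theorem rowStochastic_policyMatrix {m : ℕ} {P : Fin m → Matrix (Fin d) (Fin d) ℝ}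
    (hP : ∀ a, RowStochastic (P a)) (π : Fin d → Fin m) : RowStochastic (policyMatrix P π) :=
  ⟨fun s => (hP (π s)).1 s, fun s => (hP (π s)).2 s⟩

section ValueVec

variable {m : ℕ} {P : Fin m → Matrix (Fin d) (Fin d) ℝ} {γ : ℝ} {π : Fin d → Fin m}
  {R : Fin d → ℝ}

theorem valueVec_eq_iff (hP : ∀ a, RowStochastic (P a)) (hγ0 : 0 ≤ γ) (hγ1 : γ < 1)
    {V : Fin d → ℝ} : valueVec γ P π R = V ↔ V = R + γ • (policyMatrix P π *ᵥ V) := by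
  obtain ⟨_⟩ :=
    ((rowStochastic_policyMatrix hP π).isUnit_one_sub_smul hγ0 hγ1).nonempty_invertible
  have hA : (1 - γ • policyMatrix P π) *ᵥ V = V - γ • (policyMatrix P π *ᵥ V) := by
    rw [sub_mulVec, one_mulVec, smul_mulVec]
  rw [valueVec, ← sub_eq_iff_eq_add, ← hA]
  constructor
  · rintro rfl
    rw [mulVec_mulVec, mul_inv_of_invertible, one_mulVec]
  · exact fun h => inv_mulVec_eq_vec h.symm

theorem valueVec_affine (hP : ∀ a, RowStochastic (P a)) (hγ0 : 0 ≤ γ) (hγ1 : γ < 1)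
    (a b : ℝ) :
    valueVec γ P π (fun s => a * R s + b) = fun s => a * valueVec γ P π R s + b / (1 - γ) := by
  set V := valueVec γ P π R
  have hV := (valueVec_eq_iff hP hγ0 hγ1).1 (rfl : V = V)
  have hQ := rowStochastic_policyMatrix hP π
  rw [valueVec_eq_iff hP hγ0 hγ1,
    show (fun s => a * V s + b / (1 - γ)) = a • V + fun _ => b / (1 - γ) from rfl,
    mulVec_add, mulVec_smul, hQ.mulVec_const]
  funext s
  have hs : V s = R s + γ * (policyMatrix P π *ᵥ V) s := congrFun hV s
  have hb : b / (1 - γ) = b + γ * (b / (1 - γ)) := by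
    field_simp [(sub_pos.2 hγ1).ne']
    ring
  simp only [Pi.add_apply, Pi.smul_apply, smul_eq_mul]
  linear_combination a * hs + hb

theorem isOptimal_affine_iff (hP : ∀ a, RowStochastic (P a)) (hγ0 : 0 ≤ γ) (hγ1 : γ < 1)
    {a : ℝ} (ha : 0 < a) (b : ℝ) :
    IsOptimal γ P π (fun s => a * R s + b) ↔ IsOptimal γ P π R := by
  simp only [IsOptimal, valueVec_affine hP hγ0 hγ1, add_le_add_iff_right,
    mul_le_mul_iff_right₀ ha]

theorem isOptimal_of_bellman_le (hP : ∀ a, RowStochastic (P a)) (hγ0 : 0 ≤ γ) (hγ1 : γ < 1)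
    (h : ∀ a s, R s + γ * (P a *ᵥ valueVec γ P π R) s ≤ valueVec γ P π R s) :
    IsOptimal γ P π R := by
  intro π' s
  set V := valueVec γ P π R
  set V' := valueVec γ P π' R
  have hV' := (valueVec_eq_iff hP hγ0 hγ1).1 (rfl : V' = V')
  suffices ∀ t, (V' - V) t ≤ 0 from sub_nonpos.1 (this s)
  refine (rowStochastic_policyMatrix hP π').nonpos_of_le_smul_mulVec hγ0 hγ1 fun t => ?_
  have hrow : ∀ v : Fin d → ℝ, (policyMatrix P π' *ᵥ v) t = (P (π' t) *ᵥ v) t := fun _ => rfl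
  have ht : V' t = R t + γ * (P (π' t) *ᵥ V') t := by rw [← hrow]; exact congrFun hV' t
  rw [mulVec_sub, Pi.sub_apply, Pi.sub_apply, hrow, hrow]
  linarith [h (π' t) t]

theorem valueVec_of_policyMatrix_eq_replicateRow (hP : ∀ a, RowStochastic (P a))
    (hγ0 : 0 ≤ γ) (hγ1 : γ < 1) {r : Fin d → ℝ} (hr : ∑ t, r t = 1)
    (hπ : policyMatrix P π = replicateRow (Fin d) r) :
    valueVec γ P π R = fun s => R s + γ / (1 - γ) * (r ⬝ᵥ R) := by
  rw [valueVec_eq_iff hP hγ0 hγ1, hπ, replicateRow_mulVec_eq_const, dotProduct_add_const hr]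
  funext s
  simp only [Pi.add_apply, Pi.smul_apply, Function.const_apply, smul_eq_mul]
  field_simp [(sub_pos.2 hγ1).ne']
  ring

end ValueVec

/-- The two-action environment in which action `0` moves to a state drawn from `p` and
action `1` to a state drawn from `q`, whatever the current state. -/
def lotteryEnv (p q : Fin d → ℝ) : Fin 2 → Matrix (Fin d) (Fin d) ℝ :=
  fun a => replicateRow (Fin d) (![p, q] a)

theorem rowStochastic_lotteryEnv {p q : Fin d → ℝ} (hp : p ∈ stdSimplex ℝ (Fin d))
    (hq : q ∈ stdSimplex ℝ (Fin d)) (a : Fin 2) : RowStochastic (lotteryEnv p q a) := by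
  fin_cases a
  exacts [⟨fun _ => hp.1, fun _ => hp.2⟩, ⟨fun _ => hq.1, fun _ => hq.2⟩]

theorem isOptimal_lotteryEnv_iff [NeZero d] {p q : Fin d → ℝ} (hp : p ∈ stdSimplex ℝ (Fin d))
    (hq : q ∈ stdSimplex ℝ (Fin d)) {γ : ℝ} (hγ0 : 0 < γ) (hγ1 : γ < 1) (R : Fin d → ℝ) :
    IsOptimal γ (lotteryEnv p q) (fun _ => 0) R ↔ q ⬝ᵥ R ≤ p ⬝ᵥ R := by
  have hP := rowStochastic_lotteryEnv hp hq
  have hsum : ∀ a, ∑ t, ![p, q] a t = 1 := by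
    intro a
    fin_cases a
    exacts [hp.2, hq.2]
  have hV : ∀ a, valueVec γ (lotteryEnv p q) (fun _ => a) R =
      fun s => R s + γ / (1 - γ) * (![p, q] a ⬝ᵥ R) := fun a =>
    valueVec_of_policyMatrix_eq_replicateRow hP hγ0.le hγ1 (hsum a) rfl
  have hc : 0 < γ / (1 - γ) := div_pos hγ0 (sub_pos.2 hγ1)
  constructor
  · intro h
    simpa [hV, hc] using h (fun _ => 1) 0
  · intro h
    refine isOptimal_of_bellman_le hP hγ0.le hγ1 fun a s => ?_
    have hr : ![p, q] a ⬝ᵥ R ≤ p ⬝ᵥ R := by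
      fin_cases a
      exacts [le_rfl, h]
    have hγc : γ + γ * (γ / (1 - γ)) = γ / (1 - γ) := by
      field_simp [(sub_pos.2 hγ1).ne']
      ring
    rw [hV 0]
    change R s + γ * (![p, q] a ⬝ᵥ _) ≤ _
    rw [dotProduct_add_const (hsum a), add_le_add_iff_left]
    calc γ * (![p, q] a ⬝ᵥ R + γ / (1 - γ) * (p ⬝ᵥ R))
        ≤ γ * (p ⬝ᵥ R + γ / (1 - γ) * (p ⬝ᵥ R)) := by gcongr
      _ = γ / (1 - γ) * (p ⬝ᵥ R) := by linear_combination (p ⬝ᵥ R) * hγc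

theorem exists_affine_of_dotProduct_le_iff {ι : Type*} [Fintype ι] [DecidableEq ι] [Nonempty ι]
    {R R' : ι → ℝ}
    (h : ∀ p ∈ stdSimplex ℝ ι, ∀ q ∈ stdSimplex ℝ ι, q ⬝ᵥ R ≤ p ⬝ᵥ R ↔ q ⬝ᵥ R' ≤ p ⬝ᵥ R') :
    ∃ a > 0, ∃ b, R' = fun s => a * R s + b := by
  have hle : ∀ s t, R t ≤ R s ↔ R' t ≤ R' s := fun s t => by
    simpa using h _ (single_mem_stdSimplex ℝ s) _ (single_mem_stdSimplex ℝ t)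
  obtain ⟨smax, hmax⟩ := Finite.exists_max R
  obtain ⟨smin, hmin⟩ := Finite.exists_min R
  rcases (hmin smax).eq_or_lt with hconst | hgap
  · refine ⟨1, one_pos, R' smax - R smax, funext fun s => ?_⟩
    have hs : R s = R smax := le_antisymm (hmax s) (hconst ▸ hmin s)
    have hs' : R' s = R' smax := le_antisymm ((hle smax s).1 (hmax s)) ((hle s smax).1 hs.ge)
    rw [hs, hs']
    ring
  have hgap' : R' smin < R' smax := lt_of_not_ge fun hn => hgap.not_ge ((hle smin smax).2 hn)
  set a := (R' smax - R' smin) / (R smax - R smin)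
  have ha : a * (R smax - R smin) = R' smax - R' smin := div_mul_cancel₀ _ (sub_pos.2 hgap).ne'
  refine ⟨a, div_pos (sub_pos.2 hgap') (sub_pos.2 hgap), R' smin - a * R smin,
    funext fun s => ?_⟩
  -- `s` is indifferent to the lottery between `smax` and `smin` with the same expected `R`
  set l := (R s - R smin) / (R smax - R smin)
  have hl : l * (R smax - R smin) = R s - R smin := div_mul_cancel₀ _ (sub_pos.2 hgap).ne'
  have hl0 : 0 ≤ l := div_nonneg (sub_nonneg.2 (hmin s)) (sub_pos.2 hgap).le
  have hl1 : l ≤ 1 := (div_le_one (sub_pos.2 hgap)).2 (by linarith [hmax s])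
  set L := l • Pi.single smax 1 + (1 - l) • Pi.single smin 1 with hL
  have hLmem : L ∈ stdSimplex ℝ ι := convex_stdSimplex ℝ ι (single_mem_stdSimplex ℝ smax)
    (single_mem_stdSimplex ℝ smin) hl0 (sub_nonneg.2 hl1) (by ring)
  have hLdot : ∀ v : ι → ℝ, L ⬝ᵥ v = l * v smax + (1 - l) * v smin := fun v => by
    simp [hL, add_dotProduct]
  have hsmem := single_mem_stdSimplex ℝ s
  have hLR : L ⬝ᵥ R = Pi.single s 1 ⬝ᵥ R := by
    rw [hLdot, single_one_dotProduct]
    linear_combination hl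
  have hLR' : L ⬝ᵥ R' = Pi.single s 1 ⬝ᵥ R' :=
    le_antisymm ((h _ hsmem _ hLmem).1 hLR.le) ((h _ hLmem _ hsmem).1 hLR.ge)
  rw [hLdot, single_one_dotProduct] at hLR'
  linear_combination -hLR' - l * ha + a * hl

def BehaviorallyEquivalent (R R' : Fin d → ℝ) : Prop :=
  ∀ (m : ℕ), 1 ≤ m → ∀ (P : Fin m → Matrix (Fin d) (Fin d) ℝ),
    (∀ a, RowStochastic (P a)) → ∀ (γ : ℝ), 0 < γ → γ < 1 →
      ∀ π : Fin d → Fin m, IsOptimal γ P π R ↔ IsOptimal γ P π R'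

theorem behaviorallyEquivalent_iff_exists_affine [NeZero d] {R R' : Fin d → ℝ} :
    BehaviorallyEquivalent R R' ↔ ∃ a > 0, ∃ b, R' = fun s => a * R s + b := by
  constructor
  · intro h
    refine exists_affine_of_dotProduct_le_iff fun p hp q hq => ?_
    have hγ0 : (0 : ℝ) < 1 / 2 := by norm_num
    have hγ1 : (1 / 2 : ℝ) < 1 := by norm_num
    rw [← isOptimal_lotteryEnv_iff hp hq hγ0 hγ1, ← isOptimal_lotteryEnv_iff hp hq hγ0 hγ1]
    exact h 2 one_le_two _ (rowStochastic_lotteryEnv hp hq) _ hγ0 hγ1 _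
  · rintro ⟨a, ha, b, rfl⟩ m - P hP γ hγ0 hγ1 π
    exact (isOptimal_affine_iff hP hγ0.le hγ1 ha b).symm

section Canon

variable [NeZero d]

theorem inf'_lt_sup'_of_not_const {R : Fin d → ℝ} (hR : ¬∃ c : ℝ, R = fun _ => c) :
    univ.inf' univ_nonempty R < univ.sup' univ_nonempty R := by
  by_contra! h
  exact hR ⟨_, funext fun s =>
    le_antisymm (le_sup' R (mem_univ s)) (h.trans (inf'_le R (mem_univ s)))⟩

theorem exists_eq_affine_canon (R : Fin d → ℝ) :
    ∃ a > 0, ∃ b, R = fun s => a * canon R s + b := by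
  by_cases hR : ∃ c : ℝ, R = fun _ => c
  · obtain ⟨c, rfl⟩ := hR
    refine ⟨1, one_pos, c, ?_⟩
    rw [canon, if_pos ⟨c, rfl⟩]
    simp
  · have hgap := sub_pos.2 (inf'_lt_sup'_of_not_const hR)
    refine ⟨_, hgap, univ.inf' univ_nonempty R, funext fun s => ?_⟩
    rw [canon, if_neg hR, mul_div_cancel₀ _ hgap.ne']
    ring

theorem canon_affine {a : ℝ} (ha : 0 < a) (b : ℝ) (R : Fin d → ℝ) :
    canon (fun s => a * R s + b) = canon R := by
  have hconst : (∃ c : ℝ, (fun s => a * R s + b) = fun _ => c) ↔ ∃ c : ℝ, R = fun _ => c := by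
    constructor
    · rintro ⟨c, hc⟩
      exact ⟨(c - b) / a, funext fun s => by rw [eq_div_iff ha.ne', ← congrFun hc s]; ring⟩
    · rintro ⟨c, rfl⟩
      exact ⟨a * c + b, rfl⟩
  by_cases hR : ∃ c : ℝ, R = fun _ => c
  · rw [canon, canon, if_pos hR, if_pos (hconst.2 hR)]
  have hmono : Monotone fun x : ℝ => a * x + b := fun _ _ hxy => by
    dsimp only
    gcongr
  have hsup : univ.sup' univ_nonempty (fun s => a * R s + b) =
      a * univ.sup' univ_nonempty R + b :=
    (apply_sup'_eq_sup'_comp univ_nonempty (fun x => a * x + b) fun _ _ => hmono.map_max).symm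
  have hinf : univ.inf' univ_nonempty (fun s => a * R s + b) =
      a * univ.inf' univ_nonempty R + b :=
    (apply_inf'_eq_inf'_comp univ_nonempty (fun x => a * x + b) fun _ _ => hmono.map_min).symm
  rw [canon, canon, if_neg hR, if_neg (mt hconst.1 hR), hsup, hinf]
  have hsub : ∀ x y : ℝ, a * x + b - (a * y + b) = a * (x - y) := fun _ _ => by ring
  funext s
  rw [hsub, hsub, mul_div_mul_left _ _ ha.ne']

theorem canon_eq_canon_iff {R R' : Fin d → ℝ} :
    canon R = canon R' ↔ ∃ a > 0, ∃ b, R' = fun s => a * R s + b := by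
  constructor
  · intro h
    obtain ⟨a, ha, b, hR⟩ := exists_eq_affine_canon R
    obtain ⟨a', ha', b', hR'⟩ := exists_eq_affine_canon R'
    refine ⟨a' / a, div_pos ha' ha, b' - a' / a * b, funext fun s => ?_⟩
    rw [hR', hR, h]
    field_simp
    ring
  · rintro ⟨a, ha, b, rfl⟩
    exact (canon_affine ha b R).symm

end Canon

/-- **Canonicalization characterizes behavioral equivalence.** `R` and `R'` induce the
same set of optimal policies in every environment iff their canonical forms coincide. -/
theorem behaviorallyEquivalent_iff_canon_eq {d : ℕ} [NeZero d] (R R' : Fin d → ℝ) :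
    (∀ (m : ℕ), 1 ≤ m → ∀ (P : Fin m → Matrix (Fin d) (Fin d) ℝ),
      (∀ a, RowStochastic (P a)) → ∀ (γ : ℝ), 0 < γ → γ < 1 →
        ∀ π : Fin d → Fin m, IsOptimal γ P π R ↔ IsOptimal γ P π R') ↔
      canon R = canon R' :=
  behaviorallyEquivalent_iff_exists_affine.trans canon_eq_canon_iff.symm
end

section
/- (Lottery-versus-sure-state experiment.) Let d = 3, γ ∈ (0,1), p ∈ [0,1], and consider the environment on states {0,1,2} with two actions a and a_p defined as follows: for every state x, action a transitions deterministically to state 0 (P_a(x,0) = 1), and action a_p transitions to state 2 with probability p and to state 1 with probability 1−p. For any R ∈ ℝ³, the policy that chooses action a_p at every state is optimal for this environment and R if and only if R(0) ≤ p·R(2) + (1−p)·R(1). -/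
open Matrix

lemma fin2_eq_zero_or_one (a : Fin 2) : a = 0 ∨ a = 1 := by omega

noncomputable def lvEnv (p : ℝ) : Fin 2 → Matrix (Fin 3) (Fin 3) ℝ :=
  ![!![1, 0, 0; 1, 0, 0; 1, 0, 0],
    !![0, 1 - p, p; 0, 1 - p, p; 0, 1 - p, p]]

lemma lvEnv_apply (p : ℝ) (a : Fin 2) (s j : Fin 3) :
    lvEnv p a s j =
      if a = 0 then (if j = 0 then 1 else 0)
      else (if j = 0 then 0 else if j = 1 then 1 - p else p) := by
  fin_cases a <;> fin_cases s <;> fin_cases j <;> simp [lvEnv, vecHead, vecTail]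

lemma lvEnv_rowStochastic (p : ℝ) (hp0 : 0 ≤ p) (hp1 : p ≤ 1) (π : Fin 3 → Fin 2) :
    RowStochastic (policyMatrix (lvEnv p) π) := by
  constructor
  · intro s s'
    show 0 ≤ lvEnv p (π s) s s'
    rw [lvEnv_apply]
    split_ifs <;> linarith
  · intro s
    show ∑ s', lvEnv p (π s) s s' = 1
    simp only [lvEnv_apply, Fin.sum_univ_three]
    by_cases h : π s = 0 <;> simp [h] <;> ring

lemma det_one_sub_smul_ne_zero_s13 {d : ℕ} {P : Matrix (Fin d) (Fin d) ℝ}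
    (hP : RowStochastic P) {γ : ℝ} (h0 : 0 ≤ γ) (h1 : γ < 1) :
    ((1 : Matrix (Fin d) (Fin d) ℝ) - γ • P).det ≠ 0 := by
  apply det_ne_zero_of_sum_row_lt_diag
  intro k
  have hPk1 : P k k ≤ 1 := by
    have hsum := hP.2 k
    have h2 : ∑ j ∈ Finset.univ.erase k, P k j = 1 - P k k := by
      rw [Finset.sum_erase_eq_sub (Finset.mem_univ k), hsum]
    have h3 : 0 ≤ ∑ j ∈ Finset.univ.erase k, P k j :=
      Finset.sum_nonneg fun j _ => hP.1 k j
    linarith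
  have hdiag : ((1 : Matrix (Fin d) (Fin d) ℝ) - γ • P) k k = 1 - γ * P k k := by
    simp [Matrix.one_apply]
  have hoff : ∀ j ∈ Finset.univ.erase k,
      ‖((1 : Matrix (Fin d) (Fin d) ℝ) - γ • P) k j‖ = γ * P k j := by
    intro j hj
    have hjk : j ≠ k := Finset.ne_of_mem_erase hj
    have he : ((1 : Matrix (Fin d) (Fin d) ℝ) - γ • P) k j = -(γ * P k j) := by
      simp [Matrix.one_apply, (Ne.symm hjk)]
    rw [he, norm_neg, Real.norm_eq_abs, abs_of_nonneg (mul_nonneg h0 (hP.1 k j))]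
  rw [Finset.sum_congr rfl hoff, hdiag, ← Finset.mul_sum,
    Finset.sum_erase_eq_sub (Finset.mem_univ k), hP.2 k, Real.norm_eq_abs]
  have hpos : 0 < 1 - γ * P k k := by nlinarith [hP.1 k k]
  rw [abs_of_pos hpos]
  nlinarith [hP.1 k k]

lemma lv_bellman (γ p : ℝ) (hγ0 : 0 < γ) (hγ1 : γ < 1) (hp0 : 0 ≤ p) (hp1 : p ≤ 1)
    (π : Fin 3 → Fin 2) (R : Fin 3 → ℝ) (s : Fin 3) :
    valueVec γ (lvEnv p) π R s =
      R s + γ * (if π s = 0 then valueVec γ (lvEnv p) π R 0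
                 else (1 - p) * valueVec γ (lvEnv p) π R 1 + p * valueVec γ (lvEnv p) π R 2) := by
  set A := (1 : Matrix (Fin 3) (Fin 3) ℝ) - γ • policyMatrix (lvEnv p) π with hA
  have hdet : A.det ≠ 0 :=
    det_one_sub_smul_ne_zero_s13 (lvEnv_rowStochastic p hp0 hp1 π) hγ0.le hγ1
  set V := valueVec γ (lvEnv p) π R with hV
  have hAV : A *ᵥ V = R := by
    rw [hV, valueVec, ← hA, mulVec_mulVec,
      Matrix.mul_nonsing_inv _ (isUnit_iff_ne_zero.mpr hdet), one_mulVec]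
  have h1 : V s - γ * ((policyMatrix (lvEnv p) π *ᵥ V) s) = R s := by
    have := congrFun hAV s
    simpa [hA, sub_mulVec, smul_mulVec, one_mulVec, Pi.sub_apply, Pi.smul_apply,
      smul_eq_mul] using this
  have h2 : (policyMatrix (lvEnv p) π *ᵥ V) s =
      if π s = 0 then V 0 else (1 - p) * V 1 + p * V 2 := by
    show ∑ j, lvEnv p (π s) s j * V j = _
    simp only [lvEnv_apply, Fin.sum_univ_three]
    by_cases h : π s = 0 <;> simp [h] <;> ring
  rw [h2] at h1
  linarith

/-- **Lottery-versus-sure-state experiment.** On three states, where from every state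
action `a` (action `0`) transitions deterministically to state `0` and action `a_p`
(action `1`) transitions to state `2` with probability `p` and to state `1` with
probability `1 − p`, the policy always choosing `a_p` is optimal for `R` iff
`R 0 ≤ p·R 2 + (1 − p)·R 1`. -/
theorem lottery_vs_sure_state (γ : ℝ) (hγ0 : 0 < γ) (hγ1 : γ < 1)
    (p : ℝ) (hp0 : 0 ≤ p) (hp1 : p ≤ 1) (R : Fin 3 → ℝ) :
    IsOptimal γ
      (![!![1, 0, 0; 1, 0, 0; 1, 0, 0],
         !![0, 1 - p, p; 0, 1 - p, p; 0, 1 - p, p]])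
      (fun _ => (1 : Fin 2)) R ↔ R 0 ≤ p * R 2 + (1 - p) * R 1 := by
  show IsOptimal γ (lvEnv p) (fun _ => (1 : Fin 2)) R ↔ _
  have hγ' : 0 < 1 - γ := by linarith
  set LR : ℝ := (1 - p) * R 1 + p * R 2 with hLR
  set W : ℝ := LR / (1 - γ) with hWdef
  have hW : LR = (1 - γ) * W := by rw [hWdef]; field_simp
  set V : Fin 3 → ℝ := valueVec γ (lvEnv p) (fun _ => (1 : Fin 2)) R with hVdef
  have bell : ∀ s, V s = R s + γ * ((1 - p) * V 1 + p * V 2) := by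
    intro s
    have := lv_bellman γ p hγ0 hγ1 hp0 hp1 (fun _ => 1) R s
    simpa using this
  have e1 : (1 - p) * V 1 = (1 - p) * (R 1 + γ * ((1 - p) * V 1 + p * V 2)) := by
    rw [← bell 1]
  have e2 : p * V 2 = p * (R 2 + γ * ((1 - p) * V 1 + p * V 2)) := by
    rw [← bell 2]
  have key : (1 - γ) * ((1 - p) * V 1 + p * V 2) = LR := by
    rw [hLR]; nlinarith [e1, e2]
  have hLW : (1 - p) * V 1 + p * V 2 = W := by
    have h := key.trans hW
    exact mul_left_cancel₀ (ne_of_gt hγ') h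
  have hVval : ∀ s, V s = R s + γ * W := by
    intro s; rw [bell s, hLW]
  constructor
  · intro hopt
    have hb := lv_bellman γ p hγ0 hγ1 hp0 hp1 (fun _ => 0) R 0
    rw [if_pos rfl] at hb
    have hle : valueVec γ (lvEnv p) (fun _ => 0) R 0 ≤ V 0 := hopt (fun _ => 0) 0
    rw [hVval 0] at hle
    set U0 : ℝ := valueVec γ (lvEnv p) (fun _ => 0) R 0
    -- hb : U0 = R 0 + γ * U0, hle : U0 ≤ R 0 + γ * W
    have hUW : U0 ≤ W := le_of_mul_le_mul_left (by linarith : γ * U0 ≤ γ * W) hγ0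
    have hmul : (1 - γ) * U0 ≤ (1 - γ) * W := mul_le_mul_of_nonneg_left hUW hγ'.le
    have : R 0 ≤ LR := by linarith
    rw [hLR] at this; linarith
  · intro hR π' s
    have hR' : R 0 ≤ LR := by rw [hLR]; linarith
    set U : Fin 3 → ℝ := valueVec γ (lvEnv p) π' R with hUdef
    set b : Fin 3 → ℝ :=
      fun t => if π' t = 0 then U 0 else (1 - p) * U 1 + p * U 2 with hbdef
    have bU : ∀ t, U t = R t + γ * b t :=
      fun t => lv_bellman γ p hγ0 hγ1 hp0 hp1 π' R t
    set C : ℝ := max (U 0) ((1 - p) * U 1 + p * U 2) with hC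
    have hbC : ∀ t, b t ≤ C := by
      intro t
      rw [hbdef]
      dsimp only
      split
      · exact le_max_left _ _
      · exact le_max_right _ _
    have hU0 : U 0 ≤ LR + γ * C := by
      have h0 := bU 0
      have hm : γ * b 0 ≤ γ * C := mul_le_mul_of_nonneg_left (hbC 0) hγ0.le
      linarith
    have hLU : (1 - p) * U 1 + p * U 2 ≤ LR + γ * C := by
      have f1 : (1 - p) * U 1 = (1 - p) * (R 1 + γ * b 1) := by rw [← bU 1]
      have f2 : p * U 2 = p * (R 2 + γ * b 2) := by rw [← bU 2]
      have hm1 : (1 - p) * (γ * b 1) ≤ (1 - p) * (γ * C) :=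
        mul_le_mul_of_nonneg_left (mul_le_mul_of_nonneg_left (hbC 1) hγ0.le) (by linarith)
      have hm2 : p * (γ * b 2) ≤ p * (γ * C) :=
        mul_le_mul_of_nonneg_left (mul_le_mul_of_nonneg_left (hbC 2) hγ0.le) hp0
      rw [hLR]; nlinarith [f1, f2, hm1, hm2]
    have hCle : C ≤ W := by
      have hmax : C ≤ LR + γ * C := max_le hU0 hLU
      exact le_of_mul_le_mul_left (by linarith [hW] : (1 - γ) * C ≤ (1 - γ) * W) hγ'
    show U s ≤ V s
    rw [hVval s, bU s]
    have hm : γ * b s ≤ γ * W :=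
      mul_le_mul_of_nonneg_left (le_trans (hbC s) hCle) hγ0.le
    linarith
end

section
/- (Existence of a high-gain element for greedy selection.) Let f be a real-valued submodular function on finite subsets of a type α, i.e., for all finite X ⊆ Y and any x, f(Y ∪ {x}) − f(Y) ≤ f(X ∪ {x}) − f(X). Then for any finite set E and any nonempty finite set S, there exists x ∈ S such that f(E ∪ {x}) − f(E) ≥ (f(E ∪ S) − f(E)) / |S|. -/
/-! Submodularity bounds the gain of adding `S` to `E` by the sum of the gains of its
single elements, `f (E ∪ S) - f E ≤ ∑ x ∈ S, (f (insert x E) - f E)`; some summand is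
therefore at least the average. -/

open Finset

theorem sub_le_sum_insert_sub {α : Type*} [DecidableEq α] (f : Finset α → ℝ) (E : Finset α)
    (hsub : ∀ Y : Finset α, E ⊆ Y → ∀ x : α, f (insert x Y) - f Y ≤ f (insert x E) - f E)
    (S : Finset α) :
    f (E ∪ S) - f E ≤ ∑ x ∈ S, (f (insert x E) - f E) := by
  induction S using Finset.induction_on with
  | empty => simp
  | insert a S haS ih =>
    rw [sum_insert haS, union_insert]
    have := hsub (E ∪ S) subset_union_left a
    linarith

/-- **Existence of a high-gain element for greedy selection.** If `f` on finite subsets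
of `α` is submodular, then for any finite `E` and nonempty finite `S` there is `x ∈ S`
with `f (E ∪ {x}) − f E ≥ (f (E ∪ S) − f E) / |S|`. -/
theorem exists_high_gain_element {α : Type*} [DecidableEq α] (f : Finset α → ℝ)
    (hsub : ∀ X Y : Finset α, X ⊆ Y → ∀ x : α,
      f (insert x Y) - f Y ≤ f (insert x X) - f X)
    (E S : Finset α) (hS : S.Nonempty) :
    ∃ x ∈ S, (f (E ∪ S) - f E) / (S.card : ℝ) ≤ f (insert x E) - f E := by
  refine exists_le_of_sum_le hS ?_
  have hcard : (S.card : ℝ) ≠ 0 := by exact_mod_cast hS.card_pos.ne'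
  calc ∑ _x ∈ S, (f (E ∪ S) - f E) / (S.card : ℝ)
      = f (E ∪ S) - f E := by rw [sum_const, nsmul_eq_mul, mul_div_cancel₀ _ hcard]
    _ ≤ ∑ x ∈ S, (f (insert x E) - f E) := sub_le_sum_insert_sub f E (hsub E) S
end
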